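/- (Corollary on unobserved-location entropy reduction, late columns.) Let 2m+1 ≤ i ≤ n−1 and i+1 ≤ t ≤ n, and for each j = 1, …, n let x_j be a vector of k distinct locations of column j, with u_j the complementary vector of the remaining r−k locations of column j. Then H(Z_{u_t} | Z_{x_{1:i−m−1}}, Z_{u_{1:t−1}}) − H(Z_{u_t} | Z_{x_{1:i−m−1}}, Z_{u_{1:t−1}}, Z_{x_{i−m}}) ≤ k(r−k) · log(1 + ξ²/(η(1+η))). -/

import Mathlib

open Finset

/-- Covariance matrix of the GP: kernel plus sensor noise on the diagonal. -/
noncomputable def SigmaMat {D : Type*} [DecidableEq D] (K : D → D → ℝ) (σn2 : ℝ) :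
    Matrix D D ℝ :=
  Matrix.of fun x y => K x y + if x = y then σn2 else 0

/-- Submatrix of covariances between the entries of two finsets of locations. -/
noncomputable def subMat {D : Type*} (Cov : Matrix D D ℝ) (a s : Finset D) :
    Matrix ↥a ↥s ℝ :=
  Matrix.of fun p q => Cov p.1 q.1

/-- Posterior covariance `Σ_{aa|s} = Σ_{aa} - Σ_{as} Σ_{ss}⁻¹ Σ_{sa}`. -/
noncomputable def postCov {D : Type*} [DecidableEq D] (Cov : Matrix D D ℝ) (a s : Finset D) :
    Matrix ↥a ↥a ℝ :=
  subMat Cov a a - subMat Cov a s * (subMat Cov s s)⁻¹ * subMat Cov s a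

/-- Gaussian conditional entropy `H(Z_a | Z_s) = (1/2) log((2πe)^{|a|} det Σ_{aa|s})`. -/
noncomputable def condEnt {D : Type*} [DecidableEq D] (Cov : Matrix D D ℝ) (a s : Finset D) : ℝ :=
  (1/2) * Real.log ((2 * Real.pi * Real.exp 1) ^ a.card * (postCov Cov a s).det)

/-- Gaussian joint entropy `H(Z_a)`. -/
noncomputable def ent {D : Type*} [DecidableEq D] (Cov : Matrix D D ℝ) (a : Finset D) : ℝ :=
  condEnt Cov a ∅

/-- Mutual information `I(Z_a ; Z_b) = H(Z_a) - H(Z_a | Z_b)`. -/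
noncomputable def mutInf {D : Type*} [DecidableEq D] (Cov : Matrix D D ℝ) (a b : Finset D) : ℝ :=
  ent Cov a - condEnt Cov a b

/-- Conditional mutual information `I(Z_a ; Z_b | Z_s) = H(Z_a | Z_s) - H(Z_a | Z_s, Z_b)`. -/
noncomputable def condMutInf {D : Type*} [DecidableEq D] (Cov : Matrix D D ℝ)
    (a b s : Finset D) : ℝ :=
  condEnt Cov a s - condEnt Cov a (s ∪ b)

/-- Posterior variance `Σ_{yy|A}` of a single location `y`. -/
noncomputable def postVar {D : Type*} [DecidableEq D] (Cov : Matrix D D ℝ) (y : D)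
    (A : Finset D) : ℝ :=
  postCov Cov {y} A ⟨y, Finset.mem_singleton_self y⟩ ⟨y, Finset.mem_singleton_self y⟩

/-- Concatenation `x_{i:j}` of the column selections from column `i` to column `j`. -/
def seg {D : Type*} [DecidableEq D] (x : ℕ → Finset D) (i j : ℕ) : Finset D :=
  (Finset.Icc i j).biUnion x

/-- The set of the `r` locations of column `i`. -/
def column {D : Type*} [Fintype D] (col : D → ℕ) (i : ℕ) : Finset D :=
  Finset.univ.filter (fun p => col p = i)

/-- The complementary vector `u_i` of unobserved locations of column `i` for a path `x`. -/
def ucomp {D : Type*} [Fintype D] [DecidableEq D] (col : D → ℕ) (x : ℕ → Finset D) :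
    ℕ → Finset D :=
  fun i => column col i \ x i

/-- A path selects, in every column `i = 1,…,n`, a vector of `k` distinct locations of
column `i`. -/
def IsPath {D : Type*} [Fintype D] (col : D → ℕ) (n k : ℕ) (x : ℕ → Finset D) : Prop :=
  ∀ i, 1 ≤ i → i ≤ n → x i ⊆ column col i ∧ (x i).card = k

/-!
By the chain rule for Schur complements, `det Σ_{aa|S}` is a product of one-point posterior
variances, so the entropy reduction splits into `|a| · |b|` terms
`log (Σ_{pp|A} / Σ_{pp|A,q})` with `p ∈ a`, `q ∈ b` far apart. Submodularity bounds the
numerator's excess over the denominator by the prior reduction `K(p,q)² / (σs² + σn²)`,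
which the kernel decay makes at most `σn² ξ² / (η (1 + η))`; since every posterior variance
of the noisy process is at least `σn²` (a Schur complement of `K + σn² I` minus `σn² I` is
still a Schur complement of a positive semidefinite matrix), each ratio is at most
`1 + ξ² / (η (1 + η))`.
-/

open Matrix

section Schur

variable {D : Type*} {Cov : Matrix D D ℝ}

lemma posDef_subMat (hCov : Cov.PosDef) (A : Finset D) : (subMat Cov A A).PosDef :=
  hCov.submatrix Subtype.val_injective

lemma conjTranspose_subMat (hCov : Cov.IsHermitian) (B S : Finset D) :
    (subMat Cov B S)ᴴ = subMat Cov S B := by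
  ext i j
  exact hCov.apply i j

variable [DecidableEq D]

lemma subMat_union_submatrix_finsetUnion (Cov : Matrix D D ℝ) {B S : Finset D}
    (h : Disjoint B S) :
    (subMat Cov (B ∪ S) (B ∪ S)).submatrix (Equiv.Finset.union B S h)
        (Equiv.Finset.union B S h)
      = fromBlocks (subMat Cov B B) (subMat Cov B S) (subMat Cov S B) (subMat Cov S S) := by
  ext (i | i) (j | j) <;> rfl

lemma det_subMat_union (hCov : Cov.PosDef) {B S : Finset D} (h : Disjoint B S) :
    (subMat Cov (B ∪ S) (B ∪ S)).det = (subMat Cov S S).det * (postCov Cov B S).det := by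
  have := (posDef_subMat hCov S).isUnit.invertible
  rw [← det_submatrix_equiv_self (Equiv.Finset.union B S h),
    subMat_union_submatrix_finsetUnion, det_fromBlocks₂₂, invOf_eq_nonsing_inv]
  rfl

lemma det_postCov_pos (hCov : Cov.PosDef) {B S : Finset D} (h : Disjoint B S) :
    0 < (postCov Cov B S).det := by
  have hsplit := det_subMat_union hCov h
  exact pos_of_mul_pos_right (hsplit ▸ (posDef_subMat hCov _).det_pos)
    (posDef_subMat hCov S).det_pos.le

lemma det_postCov_singleton (Cov : Matrix D D ℝ) (p : D) (A : Finset D) :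
    (postCov Cov {p} A).det = postVar Cov p A :=
  det_unique _

lemma postVar_pos (hCov : Cov.PosDef) {p : D} {A : Finset D} (hpA : p ∉ A) :
    0 < postVar Cov p A := by
  rw [← det_postCov_singleton]
  exact det_postCov_pos hCov (disjoint_singleton_left.mpr hpA)

lemma det_postCov_insert (hCov : Cov.PosDef) {p : D} {A S : Finset D} (hpA : p ∉ A)
    (hpS : p ∉ S) (hAS : Disjoint A S) :
    (postCov Cov (insert p A) S).det = (postCov Cov A S).det * postVar Cov p (A ∪ S) := by
  have hpAS : Disjoint {p} (A ∪ S) := by simp [hpA, hpS]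
  have hsplit := det_subMat_union hCov (disjoint_insert_left.mpr ⟨hpS, hAS⟩)
  have hsplit' := det_subMat_union hCov hpAS
  rw [det_subMat_union hCov hAS, det_postCov_singleton, ← union_assoc, ← insert_eq] at hsplit'
  refine mul_left_cancel₀ (posDef_subMat hCov S).det_pos.ne' ?_
  rw [← hsplit, hsplit']
  ring

lemma postVar_empty (Cov : Matrix D D ℝ) (p : D) : postVar Cov p ∅ = Cov p p := by
  simp [postVar, postCov, subMat, mul_apply]

lemma postVar_singleton (Cov : Matrix D D ℝ) (p q : D) :
    postVar Cov p {q} = Cov p p - Cov p q * (Cov q q)⁻¹ * Cov q p := by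
  simp [postVar, postCov, subMat, mul_apply, inv_subsingleton]

end Schur

section GaussianProcess

variable {D : Type*} [DecidableEq D] {K : D → D → ℝ} {σ : ℝ}

lemma SigmaMat_eq_add_smul_one (K : D → D → ℝ) (σ : ℝ) :
    SigmaMat K σ = of K + σ • (1 : Matrix D D ℝ) := by
  ext x y
  simp [SigmaMat, one_apply]

lemma posDef_SigmaMat (hK : (of K).PosSemidef) (hσ : 0 < σ) : (SigmaMat K σ).PosDef := by
  rw [SigmaMat_eq_add_smul_one]
  exact PosDef.posSemidef_add hK (PosDef.one.smul hσ)

lemma posSemidef_postCov_SigmaMat_sub_smul_one (hK : (of K).PosSemidef) (hσ : 0 < σ)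
    {B S : Finset D} (h : Disjoint B S) :
    (postCov (SigmaMat K σ) B S - σ • 1).PosSemidef := by
  have hCov := posDef_SigmaMat hK hσ
  have := (posDef_subMat hCov S).isUnit.invertible
  have hblocks : fromBlocks (subMat (SigmaMat K σ) B B - σ • 1) (subMat (SigmaMat K σ) B S)
        (subMat (SigmaMat K σ) B S)ᴴ (subMat (SigmaMat K σ) S S)
      = (of K).submatrix (Sum.elim Subtype.val Subtype.val) (Sum.elim Subtype.val Subtype.val)
        + diagonal (Sum.elim 0 fun _ => σ) := by
    have hne : ∀ (i : B) (j : S), (i : D) ≠ j := fun i j hij => disjoint_left.mp h i.2 (hij ▸ j.2)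
    rw [conjTranspose_subMat hCov.isHermitian]
    ext (i | i) (j | j) <;>
      simp [SigmaMat, subMat, one_apply, diagonal, hne, fun i j => (hne j i).symm]
  have hdiag : (diagonal (Sum.elim 0 fun _ => σ) : Matrix (B ⊕ S) (B ⊕ S) ℝ).PosSemidef :=
    posSemidef_diagonal_iff.mpr fun | Sum.inl _ => le_rfl | Sum.inr _ => hσ.le
  have hschur := (PosDef.fromBlocks₂₂ _ _ (posDef_subMat hCov S)).mp <|
    hblocks ▸ (hK.submatrix _).add hdiag
  rw [conjTranspose_subMat hCov.isHermitian] at hschur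
  rw [postCov, sub_right_comm]
  exact hschur

lemma le_postVar_SigmaMat (hK : (of K).PosSemidef) (hσ : 0 < σ) {p : D} {A : Finset D}
    (hpA : p ∉ A) : σ ≤ postVar (SigmaMat K σ) p A := by
  have := (posSemidef_postCov_SigmaMat_sub_smul_one hK hσ
    (disjoint_singleton_left.mpr hpA)).diag_nonneg (i := ⟨p, mem_singleton_self p⟩)
  simpa [postVar, sub_nonneg] using this

end GaussianProcess

section Chains

variable {D : Type*} [DecidableEq D] {Cov : Matrix D D ℝ} {L : ℝ}

lemma log_postVar_sub_log_postVar_union_le {p : D} {b : Finset D}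
    (hstep : ∀ q ∈ b, ∀ A : Finset D, p ∉ A → q ∉ A →
      Real.log (postVar Cov p A) - Real.log (postVar Cov p (insert q A)) ≤ L)
    {A : Finset D} (hbA : Disjoint b A) (hpA : p ∉ A) (hpb : p ∉ b) :
    Real.log (postVar Cov p A) - Real.log (postVar Cov p (A ∪ b)) ≤ b.card * L := by
  induction b using Finset.induction_on with
  | empty => simp
  | insert q b hqb ih =>
    obtain ⟨hqA, hbA⟩ := disjoint_insert_left.mp hbA
    rw [union_insert, card_insert_of_notMem hqb, Nat.cast_succ]
    have hlast := hstep q (mem_insert_self q b) (A ∪ b) (by simp_all) (by simp [hqA, hqb])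
    have hfirst := ih (fun q' hq' => hstep q' (mem_insert_of_mem hq')) hbA (by simp_all)
    linarith

lemma log_det_postCov_sub_log_det_postCov_union_le (hCov : Cov.PosDef) {a b S : Finset D}
    (hstep : ∀ p ∈ a, ∀ q ∈ b, ∀ A : Finset D, p ∉ A → q ∉ A →
      Real.log (postVar Cov p A) - Real.log (postVar Cov p (insert q A)) ≤ L)
    (haS : Disjoint a S) (hab : Disjoint a b) (hbS : Disjoint b S) :
    Real.log (postCov Cov a S).det - Real.log (postCov Cov a (S ∪ b)).det
      ≤ a.card * b.card * L := by
  induction a using Finset.induction_on with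
  | empty => simp [det_isEmpty]
  | insert p a hpa ih =>
    obtain ⟨hpS, haS⟩ := disjoint_insert_left.mp haS
    obtain ⟨hpb, hab⟩ := disjoint_insert_left.mp hab
    have haSb : Disjoint a (S ∪ b) := disjoint_union_right.mpr ⟨haS, hab⟩
    have hpaS : p ∉ a ∪ S := by simp [hpa, hpS]
    have hpaSb : p ∉ a ∪ S ∪ b := by simp [hpa, hpS, hpb]
    rw [det_postCov_insert hCov hpa hpS haS, det_postCov_insert hCov hpa (by simp [hpS, hpb]) haSb,
      ← union_assoc, Real.log_mul (det_postCov_pos hCov haS).ne' (postVar_pos hCov hpaS).ne',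
      Real.log_mul (det_postCov_pos hCov haSb).ne' (postVar_pos hCov hpaSb).ne',
      card_insert_of_notMem hpa, Nat.cast_succ]
    have hlast := log_postVar_sub_log_postVar_union_le (hstep p (mem_insert_self p a))
      (disjoint_union_right.mpr ⟨hab.symm, hbS⟩) hpaS hpb
    have hfirst := ih (fun p' hp' => hstep p' (mem_insert_of_mem hp')) haS hab
    linarith

lemma condEnt_sub_condEnt_eq (hCov : Cov.PosDef) {a S S' : Finset D} (hS : Disjoint a S)
    (hS' : Disjoint a S') :
    condEnt Cov a S - condEnt Cov a S'
      = (Real.log (postCov Cov a S).det - Real.log (postCov Cov a S').det) / 2 := by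
  have hc : (2 * Real.pi * Real.exp 1) ^ a.card ≠ 0 := by positivity
  rw [condEnt, condEnt, Real.log_mul hc (det_postCov_pos hCov hS).ne',
    Real.log_mul hc (det_postCov_pos hCov hS').ne']
  ring

end Chains

section EntropyReduction

variable {D : Type*} [DecidableEq D] {K : D → D → ℝ} {σs σn ξ : ℝ}

lemma postVar_SigmaMat_empty_sub_singleton_le (hK : (of K).PosSemidef)
    (hKdiag : ∀ p, K p p = σs) (hs : 0 < σs) (hn : 0 < σn) {p q : D} (hpq : p ≠ q)
    (hKpq : |K p q| ≤ σs * ξ) :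
    postVar (SigmaMat K σn) p ∅ - postVar (SigmaMat K σn) p {q}
      ≤ σn * (ξ ^ 2 / ((σn / σs) * (1 + σn / σs))) := by
  have hKqp : K q p = K p q := hK.isHermitian.apply p q
  have hsq : K p q ^ 2 ≤ (σs * ξ) ^ 2 := by
    simpa only [sq_abs] using pow_le_pow_left₀ (abs_nonneg _) hKpq 2
  rw [postVar_empty, postVar_singleton]
  simp only [SigmaMat, of_apply, hKdiag, hKqp, if_pos, if_neg hpq, if_neg hpq.symm, add_zero]
  calc σs + σn - (σs + σn - K p q * (σs + σn)⁻¹ * K p q)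
      = K p q ^ 2 / (σs + σn) := by field_simp; ring
    _ ≤ (σs * ξ) ^ 2 / (σs + σn) := by gcongr
    _ = σn * (ξ ^ 2 / ((σn / σs) * (1 + σn / σs))) := by field_simp

lemma log_postVar_sub_log_postVar_insert_le (hK : (of K).PosSemidef)
    (hKdiag : ∀ p, K p p = σs) (hs : 0 < σs) (hn : 0 < σn) {p q : D} {A : Finset D}
    (hpq : p ≠ q) (hpA : p ∉ A) (hKpq : |K p q| ≤ σs * ξ)
    (hsub : postVar (SigmaMat K σn) p A - postVar (SigmaMat K σn) p (insert q A)
        ≤ postVar (SigmaMat K σn) p ∅ - postVar (SigmaMat K σn) p {q}) :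
    Real.log (postVar (SigmaMat K σn) p A) - Real.log (postVar (SigmaMat K σn) p (insert q A))
      ≤ Real.log (1 + ξ ^ 2 / ((σn / σs) * (1 + σn / σs))) := by
  set y := ξ ^ 2 / ((σn / σs) * (1 + σn / σs))
  have hy : 0 ≤ y := by positivity
  have hpqA : p ∉ insert q A := by simp [hpq, hpA]
  have hnoise := le_postVar_SigmaMat hK hn hpqA
  have hreduce := postVar_SigmaMat_empty_sub_singleton_le hK hKdiag hs hn hpq hKpq
  have hle : postVar (SigmaMat K σn) p A ≤ postVar (SigmaMat K σn) p (insert q A) * (1 + y) := by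
    nlinarith
  have hpos := postVar_pos (posDef_SigmaMat hK hn) hpqA
  calc Real.log (postVar (SigmaMat K σn) p A) - Real.log (postVar (SigmaMat K σn) p (insert q A))
      ≤ Real.log (postVar (SigmaMat K σn) p (insert q A) * (1 + y))
          - Real.log (postVar (SigmaMat K σn) p (insert q A)) := by
        gcongr
        exact postVar_pos (posDef_SigmaMat hK hn) hpA
    _ = Real.log (1 + y) := by
        rw [Real.log_mul hpos.ne' (by positivity)]
        ring

lemma condEnt_sub_condEnt_union_le (hK : (of K).PosSemidef) (hKdiag : ∀ p, K p p = σs)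
    (hs : 0 < σs) (hn : 0 < σn)
    (hsub : ∀ (p q : D) (A : Finset D), p ∉ A → q ∉ A → p ≠ q →
      postVar (SigmaMat K σn) p A - postVar (SigmaMat K σn) p (insert q A)
        ≤ postVar (SigmaMat K σn) p ∅ - postVar (SigmaMat K σn) p {q})
    {a b S : Finset D} (haS : Disjoint a S) (hab : Disjoint a b) (hbS : Disjoint b S)
    (hdecay : ∀ p ∈ a, ∀ q ∈ b, |K p q| ≤ σs * ξ) :
    condEnt (SigmaMat K σn) a S - condEnt (SigmaMat K σn) a (S ∪ b)
      ≤ a.card * b.card * Real.log (1 + ξ ^ 2 / ((σn / σs) * (1 + σn / σs))) / 2 := by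
  have hCov := posDef_SigmaMat hK hn
  rw [condEnt_sub_condEnt_eq hCov haS (disjoint_union_right.mpr ⟨haS, hab⟩)]
  gcongr
  refine log_det_postCov_sub_log_det_postCov_union_le hCov ?_ haS hab hbS
  intro p hp q hq A hpA hqA
  have hpq : p ≠ q := fun h => disjoint_left.mp hab hp (h ▸ hq)
  exact log_postVar_sub_log_postVar_insert_le hK hKdiag hs hn hpq hpA (hdecay p hp q hq)
    (hsub p q A hpA hqA hpq)

end EntropyReduction

section Columns

variable {D : Type*} [Fintype D] {col : D → ℕ}

lemma col_eq_of_mem_column {j : ℕ} {p : D} (hp : p ∈ column col j) : col p = j :=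
  (mem_filter.mp hp).2

variable [DecidableEq D]

lemma col_le_of_mem_seg {y : ℕ → Finset D} {lo hi : ℕ}
    (hy : ∀ j ∈ Icc lo hi, y j ⊆ column col j) {p : D} (hp : p ∈ seg y lo hi) : col p ≤ hi := by
  obtain ⟨j, hj, hpj⟩ := mem_biUnion.mp hp
  rw [col_eq_of_mem_column (hy j hj hpj)]
  exact (mem_Icc.mp hj).2

lemma disjoint_seg_ucomp {x : ℕ → Finset D} {j : ℕ} (hx : x j ⊆ column col j) (lo hi : ℕ) :
    Disjoint (x j) (seg (ucomp col x) lo hi) := by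
  refine disjoint_left.mpr fun p hpx hpu => ?_
  obtain ⟨l, -, hpl⟩ := mem_biUnion.mp hpu
  obtain ⟨hpcol, hpxl⟩ := mem_sdiff.mp hpl
  obtain rfl : l = j := (col_eq_of_mem_column hpcol).symm.trans (col_eq_of_mem_column (hx hpx))
  exact hpxl hpx

end Columns

theorem corollary_unobserved_entropy_reduction_late_general
    {D : Type*} [Fintype D] [DecidableEq D]
    (r n k m : ℕ) (col : D → ℕ)
    (K : D → D → ℝ) (σs2 σn2 ξ : ℝ)
    (hkr : k ≤ r)
    (hs : 0 < σs2) (hn : 0 < σn2)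
    (hKpsd : (Matrix.of K).PosSemidef)
    (hKdiag : ∀ p : D, K p p = σs2)
    (hcolcard : ∀ i : ℕ, 1 ≤ i → i ≤ n → (column col i).card = r)
    (hdecay : ∀ p q : D, (m : ℤ) + 1 ≤ |(col p : ℤ) - (col q : ℤ)| → |K p q| ≤ σs2 * ξ)
    (hsub : ∀ (p q : D) (A : Finset D), p ∉ A → q ∉ A → p ≠ q →
      postVar (SigmaMat K σn2) p A - postVar (SigmaMat K σn2) p (insert q A)
        ≤ postVar (SigmaMat K σn2) p ∅ - postVar (SigmaMat K σn2) p {q})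
    (i t : ℕ) (hi1 : 2 * m + 1 ≤ i) (ht1 : i + 1 ≤ t) (ht2 : t ≤ n)
    (x : ℕ → Finset D)
    (hx : ∀ j : ℕ, 1 ≤ j → j ≤ n → x j ⊆ column col j ∧ (x j).card = k) :
    condEnt (SigmaMat K σn2) (ucomp col x t)
        (seg x 1 (i - m - 1) ∪ seg (ucomp col x) 1 (t - 1))
        - condEnt (SigmaMat K σn2) (ucomp col x t)
            ((seg x 1 (i - m - 1) ∪ seg (ucomp col x) 1 (t - 1)) ∪ x (i - m))
      ≤ (k : ℝ) * ((r : ℝ) - (k : ℝ)) * Real.log (1 + ξ ^ 2 / ((σn2 / σs2) * (1 + σn2 / σs2))) := by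
  obtain ⟨hxb, hcardb⟩ := hx (i - m) (by omega) (by omega)
  obtain ⟨hxt, hcardt⟩ := hx t (by omega) ht2
  have ha : ∀ p ∈ ucomp col x t, col p = t := fun p hp => col_eq_of_mem_column (sdiff_subset hp)
  have hb : ∀ q ∈ x (i - m), col q = i - m := fun q hq => col_eq_of_mem_column (hxb hq)
  have hxS : ∀ p ∈ seg x 1 (i - m - 1), col p ≤ i - m - 1 :=
    fun p => col_le_of_mem_seg fun j hj => (hx j (mem_Icc.mp hj).1 (by grind)).1
  have huS : ∀ p ∈ seg (ucomp col x) 1 (t - 1), col p ≤ t - 1 :=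
    fun p => col_le_of_mem_seg fun j _ => sdiff_subset
  have haS : Disjoint (ucomp col x t) (seg x 1 (i - m - 1) ∪ seg (ucomp col x) 1 (t - 1)) :=
    disjoint_left.mpr fun p hpa hpS => by rcases mem_union.mp hpS with hp | hp <;> grind
  have hbS : Disjoint (x (i - m)) (seg x 1 (i - m - 1) ∪ seg (ucomp col x) 1 (t - 1)) :=
    disjoint_union_right.mpr
      ⟨disjoint_left.mpr fun p hpb hpS => by grind, disjoint_seg_ucomp hxb 1 (t - 1)⟩
  have hmain := condEnt_sub_condEnt_union_le hKpsd hKdiag hs hn hsub haS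
    (disjoint_left.mpr fun p hpa hpb => by grind) hbS
    fun p hp q hq => hdecay p q (by rw [ha p hp, hb q hq]; exact le_abs.mpr (.inl (by omega)))
  have hcarda : ((ucomp col x t).card : ℝ) = r - k := by
    rw [ucomp, card_sdiff_of_subset hxt, hcolcard t (by omega) ht2, hcardt, Nat.cast_sub hkr]
  rw [hcarda, hcardb, mul_comm ((r : ℝ) - k)] at hmain
  refine hmain.trans (half_le_self (mul_nonneg (mul_nonneg k.cast_nonneg ?_) ?_))
  · exact sub_nonneg.mpr (Nat.cast_le.mpr hkr)
  · exact Real.log_nonneg (le_add_of_nonneg_right (by positivity))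

/-- **Corollary on unobserved-location entropy reduction, late columns.** -/
theorem corollary_unobserved_entropy_reduction_late
    {D : Type*} [Fintype D] [DecidableEq D]
    (r n k m : ℕ) (col : D → ℕ)
    (K : D → D → ℝ) (σs2 σn2 l1 ξ : ℝ)
    (hr : 1 ≤ r) (hk1 : 1 ≤ k) (hkr : k ≤ r) (hm : 1 ≤ m)
    (hs : 0 < σs2) (hn : 0 < σn2) (hl1 : 0 < l1)
    (hξ : ξ = Real.exp (-((m : ℝ) + 1) ^ 2 / (2 * l1 ^ 2)))
    (hKsymm : ∀ p q : D, K p q = K q p)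
    (hKpsd : (Matrix.of K).PosSemidef)
    (hKdiag : ∀ p : D, K p p = σs2)
    (hcol : ∀ p : D, 1 ≤ col p ∧ col p ≤ n)
    (hcolcard : ∀ i : ℕ, 1 ≤ i → i ≤ n → (column col i).card = r)
    (hdecay : ∀ p q : D, (m : ℤ) + 1 ≤ |(col p : ℤ) - (col q : ℤ)| → |K p q| ≤ σs2 * ξ)
    (hsub : ∀ (p q : D) (A : Finset D), p ∉ A → q ∉ A → p ≠ q →
      postVar (SigmaMat K σn2) p A - postVar (SigmaMat K σn2) p (insert q A)
        ≤ postVar (SigmaMat K σn2) p ∅ - postVar (SigmaMat K σn2) p {q})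
    (i t : ℕ) (hi1 : 2 * m + 1 ≤ i) (hi2 : i ≤ n - 1) (ht1 : i + 1 ≤ t) (ht2 : t ≤ n)
    (x : ℕ → Finset D)
    (hx : ∀ j : ℕ, 1 ≤ j → j ≤ n → x j ⊆ column col j ∧ (x j).card = k) :
    condEnt (SigmaMat K σn2) (ucomp col x t)
        (seg x 1 (i - m - 1) ∪ seg (ucomp col x) 1 (t - 1))
        - condEnt (SigmaMat K σn2) (ucomp col x t)
            ((seg x 1 (i - m - 1) ∪ seg (ucomp col x) 1 (t - 1)) ∪ x (i - m))
      ≤ (k : ℝ) * ((r : ℝ) - (k : ℝ)) * Real.log (1 + ξ ^ 2 / ((σn2 / σs2) * (1 + σn2 / σs2))) :=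
  corollary_unobserved_entropy_reduction_late_general r n k m col K σs2 σn2 ξ hkr hs hn hKpsd hKdiag
    hcolcard hdecay hsub i t hi1 ht1 ht2 x hx
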